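/- Let (V,β,ρ,μ) be a representation of a Hom-pre-Lie algebra (A,·,α) with β invertible. Then the following statements are equivalent: (i) (V, β, ρ−μ, −μ) is a representation of the Hom-pre-Lie algebra (A,·,α); (ii) (V*, (β^{-1})*, ρ⋆, μ⋆) is a representation of the Hom-pre-Lie algebra (A,·,α), where ⟨ρ⋆(x)(ξ), u⟩ = −⟨ξ, β^{-2}(ρ(α(x))(u))⟩ and ⟨μ⋆(x)(ξ), u⟩ = −⟨ξ, β^{-2}(μ(α(x))(u))⟩; (iii) μ(α(x))∘μ(y) = −μ(α(y))∘μ(x) for all x,y ∈ A. -/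
import Mathlib


/-- A Hom-pre-Lie algebra structure on `A`: a bilinear product and an algebra
morphism `α` satisfying the Hom-pre-Lie identity. -/
def IsHomPreLie {K A : Type*} [Field K] [AddCommGroup A] [Module K A]
    (mul : A →ₗ[K] A →ₗ[K] A) (α : A →ₗ[K] A) : Prop :=
  (∀ x y, α (mul x y) = mul (α x) (α y)) ∧
  (∀ x y z, mul (mul x y) (α z) - mul (α x) (mul y z)
      = mul (mul y x) (α z) - mul (α y) (mul x z))

/-- A representation of a Hom-Lie algebra `(L, bracket, α)` on `V` with respect to `β`. -/
def IsHomLieRep {K L V : Type*} [Field K] [AddCommGroup L] [Module K L]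
    [AddCommGroup V] [Module K V]
    (bracket : L →ₗ[K] L →ₗ[K] L) (α : L →ₗ[K] L)
    (β : V →ₗ[K] V) (ρ : L →ₗ[K] Module.End K V) : Prop :=
  (∀ x, ρ (α x) ∘ₗ β = β ∘ₗ ρ x) ∧
  (∀ x y, ρ (bracket x y) ∘ₗ β = ρ (α x) ∘ₗ ρ y - ρ (α y) ∘ₗ ρ x)

/-- A representation `(V, β, ρ, μ)` of a Hom-pre-Lie algebra `(A, mul, α)`:
`ρ` is a representation of the sub-adjacent Hom-Lie algebra (whose bracket is the
commutator `mul - mul.flip`) with respect to `β`, together with the two compatibility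
conditions for `μ`. -/
def IsHomPreLieRep {K A V : Type*} [Field K] [AddCommGroup A] [Module K A]
    [AddCommGroup V] [Module K V]
    (mul : A →ₗ[K] A →ₗ[K] A) (α : A →ₗ[K] A)
    (β : V →ₗ[K] V) (ρ μ : A →ₗ[K] Module.End K V) : Prop :=
  IsHomLieRep (mul - mul.flip) α β ρ ∧
  (∀ x, β ∘ₗ μ x = μ (α x) ∘ₗ β) ∧
  (∀ x y, μ (α y) ∘ₗ μ x - μ (mul x y) ∘ₗ β = μ (α y) ∘ₗ ρ x - ρ (α x) ∘ₗ μ y)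

/-- The twisted dual map `ρ⋆ : A → gl(V*)`, defined by
`⟨ρ⋆(x)(ξ), u⟩ = −⟨ξ, β⁻²(ρ(α(x))(u))⟩`. -/
noncomputable def starRep {K A V : Type*} [Field K] [AddCommGroup A] [Module K A]
    [AddCommGroup V] [Module K V]
    (α : A →ₗ[K] A) (β : V ≃ₗ[K] V) (ρ : A →ₗ[K] Module.End K V) :
    A →ₗ[K] Module.End K (V →ₗ[K] K) where
  toFun x := - (((β.symm.toLinearMap ∘ₗ β.symm.toLinearMap) ∘ₗ ρ (α x)).dualMap :
      Module.End K (Module.Dual K V))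
  map_add' x y := by
    ext ξ u
    simp [LinearMap.dualMap_apply]
    abel
  map_smul' c x := by
    ext ξ u
    simp [LinearMap.dualMap_apply]

section auxDual

variable {K V : Type*} [Field K] [AddCommGroup V] [Module K V]

lemma dm_merge (f g : V →ₗ[K] V) : f.dualMap ∘ₗ g.dualMap = (g ∘ₗ f).dualMap := rfl

lemma dm_sub' (f g : V →ₗ[K] V) : f.dualMap - g.dualMap = (f - g).dualMap := by
  ext ξ v; simp

lemma dm_add' (f g : V →ₗ[K] V) : f.dualMap + g.dualMap = (f + g).dualMap := by
  ext ξ v; simp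

lemma dm_neg' (f : V →ₗ[K] V) : -f.dualMap = (-f).dualMap := by
  ext ξ v; simp

lemma dual_eq_iff (f g : V →ₗ[K] V) : f.dualMap = g.dualMap ↔ f = g := by
  constructor
  · intro h
    ext v
    rw [← sub_eq_zero, ← Module.forall_dual_apply_eq_zero_iff K]
    intro φ
    have := congrArg (fun t => (t φ) v) h
    simpa [sub_eq_zero] using this
  · rintro rfl; rfl

end auxDual
/-- Let `(V,β,ρ,μ)` be a representation of a Hom-pre-Lie algebra
`(A,·,α)` with `β` invertible (and `V` finite-dimensional for (ii)).  The following
are equivalent: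
(i) `(V, β, ρ−μ, −μ)` is a representation of `(A,·,α)`;
(ii) `(V*, (β⁻¹)*, ρ⋆, μ⋆)` is a representation of `(A,·,α)`;
(iii) `μ(α(x)) ∘ μ(y) = −μ(α(y)) ∘ μ(x)` for all `x, y ∈ A`. -/
theorem rep_equiv_conditions
    {K A V : Type*} [Field K] [AddCommGroup A] [Module K A]
    [AddCommGroup V] [Module K V] [FiniteDimensional K V]
    (mul : A →ₗ[K] A →ₗ[K] A) (α : A ≃ₗ[K] A)
    (hA : IsHomPreLie mul (α : A →ₗ[K] A))
    (β : V ≃ₗ[K] V) (ρ μ : A →ₗ[K] Module.End K V)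
    (hrep : IsHomPreLieRep mul (α : A →ₗ[K] A) (β : V →ₗ[K] V) ρ μ) :
    (IsHomPreLieRep mul (α : A →ₗ[K] A) (β : V →ₗ[K] V) (ρ - μ) (- μ) ↔
      IsHomPreLieRep mul (α : A →ₗ[K] A) (β.symm.toLinearMap.dualMap)
        (starRep (α : A →ₗ[K] A) β ρ) (starRep (α : A →ₗ[K] A) β μ)) ∧
    (IsHomPreLieRep mul (α : A →ₗ[K] A) (β : V →ₗ[K] V) (ρ - μ) (- μ) ↔
      ∀ x y, μ (α x) ∘ₗ μ y = - (μ (α y) ∘ₗ μ x)) := by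
  obtain ⟨⟨h1, h2⟩, h3, h4⟩ := hrep
  -- restatements in the `End`-ring language, with uniform coercions
  have h1' : ∀ x, ρ (α x) * (β : V →ₗ[K] V) = (β : V →ₗ[K] V) * ρ x := h1
  have h3' : ∀ x, (β : V →ₗ[K] V) * μ x = μ (α x) * (β : V →ₗ[K] V) := h3
  have h4' : ∀ x y, μ (α y) * μ x - μ (mul x y) * (β : V →ₗ[K] V)
      = μ (α y) * ρ x - ρ (α x) * μ y := h4
  have h2' : ∀ x y, ρ (mul x y) * (β : V →ₗ[K] V) - ρ (mul y x) * (β : V →ₗ[K] V)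
      = ρ (α x) * ρ y - ρ (α y) * ρ x := by
    intro x y
    have := h2 x y
    rw [show ((mul - mul.flip) x y) = mul x y - mul y x from rfl, map_sub] at this
    rw [← sub_mul]
    exact this
  have e : ∀ x y, μ (mul x y) * (β : V →ₗ[K] V)
      = μ (α y) * μ x - (μ (α y) * ρ x - ρ (α x) * μ y) := by
    intro x y
    rw [← h4' x y]; abel
  -- invertibility toolkit
  have hβb1 : (β : V →ₗ[K] V) * β.symm.toLinearMap = 1 := by ext v; simp
  have hbβ1 : β.symm.toLinearMap * (β : V →ₗ[K] V) = 1 := by ext v; simp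
  have hβb' : ∀ f : Module.End K V,
      (β : V →ₗ[K] V) * (β.symm.toLinearMap * f) = f := fun f => by
    rw [← mul_assoc, hβb1, one_mul]
  have hbβ' : ∀ f : Module.End K V,
      β.symm.toLinearMap * ((β : V →ₗ[K] V) * f) = f := fun f => by
    rw [← mul_assoc, hbβ1, one_mul]
  have lcan : ∀ f g : Module.End K V,
      (β : V →ₗ[K] V) * f = (β : V →ₗ[K] V) * g → f = g := fun f g h => by
    have := congrArg (fun t => β.symm.toLinearMap * t) h
    simpa [hbβ'] using this
  have rcan : ∀ f g : Module.End K V,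
      f * (β : V →ₗ[K] V) = g * (β : V →ₗ[K] V) → f = g := fun f g h => by
    have := congrArg (fun t => t * β.symm.toLinearMap) h
    simpa [mul_assoc, hβb1] using this
  have cρ : ∀ z, β.symm.toLinearMap * ρ (α z) = ρ z * β.symm.toLinearMap := fun z => by
    have := congrArg
      (fun t => β.symm.toLinearMap * t * β.symm.toLinearMap) (h1' z)
    simpa [mul_assoc, hβb1, hbβ1, hbβ', hβb'] using this
  have cμ : ∀ z, β.symm.toLinearMap * μ (α z) = μ z * β.symm.toLinearMap := fun z => by
    have := congrArg
      (fun t => β.symm.toLinearMap * t * β.symm.toLinearMap) (h3' z)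
    have h := this
    simp only [mul_assoc, hβb1, hbβ1, hbβ', hβb', mul_one, one_mul] at h
    exact h.symm
  have cρ' : ∀ z (f : Module.End K V), β.symm.toLinearMap * (ρ (α z) * f)
      = ρ z * (β.symm.toLinearMap * f) := fun z f => by
    rw [← mul_assoc, cρ, mul_assoc]
  have cμ' : ∀ z (f : Module.End K V), β.symm.toLinearMap * (μ (α z) * f)
      = μ z * (β.symm.toLinearMap * f) := fun z f => by
    rw [← mul_assoc, cμ, mul_assoc]
  have dρ' : ∀ z (f : Module.End K V), (β : V →ₗ[K] V) * (ρ z * f)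
      = ρ (α z) * ((β : V →ₗ[K] V) * f) := fun z f => by
    rw [← mul_assoc, ← h1', mul_assoc]
  have dμ' : ∀ z (f : Module.End K V), (β : V →ₗ[K] V) * (μ z * f)
      = μ (α z) * ((β : V →ₗ[K] V) * f) := fun z f => by
    rw [← mul_assoc, h3', mul_assoc]
  -- the equivalence (i) ↔ (iii)
  have hiff1 : IsHomPreLieRep mul (α : A →ₗ[K] A) (β : V →ₗ[K] V) (ρ - μ) (- μ) ↔
      ∀ x y, μ (α x) ∘ₗ μ y = - (μ (α y) ∘ₗ μ x) := by
    constructor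
    · rintro ⟨-, -, hb2⟩
      intro x y
      have s : -(μ (α y)) * (-(μ x)) - (-(μ (mul x y))) * (β : V →ₗ[K] V)
          = -(μ (α y)) * (ρ x - μ x) - (ρ (α x) - μ (α x)) * (-(μ y)) := hb2 x y
      have s2 : μ (α y) * μ x + μ (mul x y) * (β : V →ₗ[K] V)
          = -(μ (α y)) * (ρ x - μ x) - (ρ (α x) - μ (α x)) * (-(μ y)) := by
        rw [← s]; noncomm_ring
      rw [e x y] at s2
      show μ (α x) * μ y = -(μ (α y) * μ x)
      calc μ (α x) * μ y
          = ((μ (α y) * μ x + (μ (α y) * μ x - (μ (α y) * ρ x - ρ (α x) * μ y)))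
              - (-(μ (α y)) * (ρ x - μ x) - (ρ (α x) - μ (α x)) * (-(μ y))))
            - μ (α y) * μ x := by noncomm_ring
        _ = -(μ (α y) * μ x) := by rw [s2]; noncomm_ring
    · intro hiii
      have hiii' : ∀ x y, μ (α x) * μ y = -(μ (α y) * μ x) := hiii
      refine ⟨⟨?_, ?_⟩, ?_, ?_⟩
      · intro x
        show (ρ (α x) - μ (α x)) * (β : V →ₗ[K] V) = (β : V →ₗ[K] V) * (ρ x - μ x)
        calc (ρ (α x) - μ (α x)) * (β : V →ₗ[K] V)
            = ρ (α x) * (β : V →ₗ[K] V) - μ (α x) * (β : V →ₗ[K] V) := by noncomm_ring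
          _ = (β : V →ₗ[K] V) * ρ x - (β : V →ₗ[K] V) * μ x := by rw [h1', h3']
          _ = (β : V →ₗ[K] V) * (ρ x - μ x) := by noncomm_ring
      · intro x y
        show (ρ ((mul - mul.flip) x y) - μ ((mul - mul.flip) x y)) * (β : V →ₗ[K] V)
            = (ρ (α x) - μ (α x)) * (ρ y - μ y) - (ρ (α y) - μ (α y)) * (ρ x - μ x)
        rw [show ((mul - mul.flip) x y) = mul x y - mul y x from rfl, map_sub, map_sub]
        calc (ρ (mul x y) - ρ (mul y x) - (μ (mul x y) - μ (mul y x))) * (β : V →ₗ[K] V)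
            = (ρ (mul x y) * (β : V →ₗ[K] V) - ρ (mul y x) * (β : V →ₗ[K] V))
              - μ (mul x y) * (β : V →ₗ[K] V) + μ (mul y x) * (β : V →ₗ[K] V) := by
              noncomm_ring
          _ = (ρ (α x) * ρ y - ρ (α y) * ρ x)
              - (μ (α y) * μ x - (μ (α y) * ρ x - ρ (α x) * μ y))
              + (μ (α x) * μ y - (μ (α x) * ρ y - ρ (α y) * μ x)) := by
              rw [h2', e x y, e y x]
          _ = (ρ (α x) - μ (α x)) * (ρ y - μ y) - (ρ (α y) - μ (α y)) * (ρ x - μ x) := by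
              noncomm_ring
      · intro x
        show (β : V →ₗ[K] V) * (-(μ x)) = -(μ (α x)) * (β : V →ₗ[K] V)
        calc (β : V →ₗ[K] V) * (-(μ x)) = -((β : V →ₗ[K] V) * μ x) := by noncomm_ring
          _ = -(μ (α x) * (β : V →ₗ[K] V)) := by rw [h3']
          _ = -(μ (α x)) * (β : V →ₗ[K] V) := by noncomm_ring
      · intro x y
        show -(μ (α y)) * (-(μ x)) - (-(μ (mul x y))) * (β : V →ₗ[K] V)
            = -(μ (α y)) * (ρ x - μ x) - (ρ (α x) - μ (α x)) * (-(μ y))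
        have hz : μ (α x) * μ y + μ (α y) * μ x = 0 := by
          rw [hiii' x y]; abel
        calc -(μ (α y)) * (-(μ x)) - (-(μ (mul x y))) * (β : V →ₗ[K] V)
            = μ (α y) * μ x + μ (mul x y) * (β : V →ₗ[K] V) := by noncomm_ring
          _ = μ (α y) * μ x + (μ (α y) * μ x - (μ (α y) * ρ x - ρ (α x) * μ y)) := by
              rw [e x y]
          _ = (μ (α x) * μ y + μ (α y) * μ x)
              + (-(μ (α y)) * (ρ x - μ x) - (ρ (α x) - μ (α x)) * (-(μ y))) := by
              noncomm_ring
          _ = -(μ (α y)) * (ρ x - μ x) - (ρ (α x) - μ (α x)) * (-(μ y)) := by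
              rw [hz, zero_add]
  -- the equivalence (ii) ↔ (iii)
  have sr : ∀ (ν : A →ₗ[K] Module.End K V) x, starRep (α : A →ₗ[K] A) β ν x
      = -(((β.symm.toLinearMap ∘ₗ β.symm.toLinearMap) ∘ₗ ν (α x)).dualMap) :=
    fun _ _ => rfl
  have hiff2 : IsHomPreLieRep mul (α : A →ₗ[K] A) (β.symm.toLinearMap.dualMap)
        (starRep (α : A →ₗ[K] A) β ρ) (starRep (α : A →ₗ[K] A) β μ) ↔
      ∀ x y, μ (α x) ∘ₗ μ y = - (μ (α y) ∘ₗ μ x) := by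
    constructor
    · rintro ⟨-, -, hb2⟩
      intro x y
      have s := hb2 x y
      simp only [sr, LinearMap.neg_comp, LinearMap.comp_neg, neg_neg, dm_merge, dm_sub',
        dm_add', dm_neg', sub_neg_eq_add, LinearEquiv.coe_coe] at s
      rw [dual_eq_iff] at s
      have s2 := congrArg (fun t : Module.End K V =>
        (β : V →ₗ[K] V) * ((β : V →ₗ[K] V) * (t * ((β : V →ₗ[K] V) * (β : V →ₗ[K] V))))) s
      simp only [← Module.End.mul_eq_comp, LinearMap.sub_apply, LinearMap.flip_apply, map_sub,
          mul_sub, sub_mul, mul_add, add_mul, neg_mul, mul_neg, neg_neg, mul_assoc,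
          hβb', hbβ', hβb1, hbβ1, cρ', cμ', cρ, cμ, dρ', dμ', mul_one, one_mul] at s2
      rw [e x y] at s2
      show μ (α x) * μ y = -(μ (α y) * μ x)
      calc μ (α x) * μ y
          = ((μ (α x) * μ y + (μ (α y) * μ x - (μ (α y) * ρ x - ρ (α x) * μ y)))
              - (ρ (α x) * μ y - μ (α y) * ρ x)) - μ (α y) * μ x := by noncomm_ring
        _ = -(μ (α y) * μ x) := by rw [s2]; noncomm_ring
    · intro hiii
      have hiii' : ∀ x y, μ (α x) * μ y = -(μ (α y) * μ x) := hiii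
      refine ⟨⟨?_, ?_⟩, ?_, ?_⟩
      · intro x
        simp only [sr, LinearMap.neg_comp, LinearMap.comp_neg, neg_neg, dm_merge, dm_sub',
          dm_add', dm_neg', sub_neg_eq_add, LinearEquiv.coe_coe]
        rw [dual_eq_iff, neg_inj]
        refine rcan _ _ (lcan _ _ (lcan _ _ ?_))
        simp only [← Module.End.mul_eq_comp, LinearMap.sub_apply, LinearMap.flip_apply, map_sub,
          mul_sub, sub_mul, mul_add, add_mul, neg_mul, mul_neg, neg_neg, mul_assoc,
          hβb', hbβ', hβb1, hbβ1, cρ', cμ', cρ, cμ, dρ', dμ', mul_one, one_mul]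
      · intro x y
        simp only [sr, LinearMap.neg_comp, LinearMap.comp_neg, neg_neg, dm_merge, dm_sub',
          dm_add', dm_neg', sub_neg_eq_add, LinearEquiv.coe_coe]
        rw [dual_eq_iff]
        refine rcan _ _ (rcan _ _ (lcan _ _ (lcan _ _ ?_)))
        simp only [← Module.End.mul_eq_comp, LinearMap.sub_apply, LinearMap.flip_apply, map_sub,
          mul_sub, sub_mul, mul_add, add_mul, neg_mul, mul_neg, neg_neg, mul_assoc,
          hβb', hbβ', hβb1, hbβ1, cρ', cμ', cρ, cμ, dρ', dμ', mul_one, one_mul]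
        rw [h2' x y]
        noncomm_ring
      · intro x
        simp only [sr, LinearMap.neg_comp, LinearMap.comp_neg, neg_neg, dm_merge, dm_sub',
          dm_add', dm_neg', sub_neg_eq_add, LinearEquiv.coe_coe]
        rw [dual_eq_iff, neg_inj]
        refine rcan _ _ (lcan _ _ (lcan _ _ ?_))
        simp only [← Module.End.mul_eq_comp, LinearMap.sub_apply, LinearMap.flip_apply, map_sub,
          mul_sub, sub_mul, mul_add, add_mul, neg_mul, mul_neg, neg_neg, mul_assoc,
          hβb', hbβ', hβb1, hbβ1, cρ', cμ', cρ, cμ, dρ', dμ', mul_one, one_mul]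
      · intro x y
        simp only [sr, LinearMap.neg_comp, LinearMap.comp_neg, neg_neg, dm_merge, dm_sub',
          dm_add', dm_neg', sub_neg_eq_add, LinearEquiv.coe_coe]
        rw [dual_eq_iff]
        refine rcan _ _ (rcan _ _ (lcan _ _ (lcan _ _ ?_)))
        simp only [← Module.End.mul_eq_comp, LinearMap.sub_apply, LinearMap.flip_apply, map_sub,
          mul_sub, sub_mul, mul_add, add_mul, neg_mul, mul_neg, neg_neg, mul_assoc,
          hβb', hbβ', hβb1, hbβ1, cρ', cμ', cρ, cμ, dρ', dμ', mul_one, one_mul]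
        rw [e x y, hiii' x y]
        noncomm_ring
  exact ⟨hiff1.trans hiff2.symm, hiff1⟩
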